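/- arXiv:1710.00145 — 4 statements merged into one kernel-verified Lean document; each statement's English description precedes it below -/
import Mathlib

section
/- Let M be a positive integer, Z > 0 and B > 0 real numbers, and g : Fin M → ℝ with g(i) > 0 for all i. Let A be the M × M real matrix whose (i,j) entry equals M·(g(i) + Z) − Z if i = j and −Z if i ≠ j, and let Y ∈ ℝ^M be the vector with all entries equal to B. Define p ∈ ℝ^M by p(i) = (B/(g(i) + Z)) · (1/(M − Σ_{j} Z/(g(j) + Z))). Then p(i) > 0 for all i, A · p = Y, and p is the unique solution of A · x = Y. -/
open scoped BigOperators

/-- Lemma 2 of the paper: the closed-form prices are strictly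
positive and are the unique solution of the linear system `A x = Y`. -/
theorem prices_positive_unique
    (M : ℕ) (hM : 0 < M) (Z B : ℝ) (hZ : 0 < Z) (hB : 0 < B)
    (g : Fin M → ℝ) (hg : ∀ i, 0 < g i)
    (A : Matrix (Fin M) (Fin M) ℝ)
    (hA : ∀ i j, A i j = if i = j then (M : ℝ) * (g i + Z) - Z else -Z)
    (Y : Fin M → ℝ) (hY : ∀ i, Y i = B)
    (p : Fin M → ℝ)
    (hp : ∀ i, p i = (B / (g i + Z)) * (1 / ((M : ℝ) - ∑ j, Z / (g j + Z)))) :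
    (∀ i, 0 < p i) ∧ A.mulVec p = Y ∧ (∀ x : Fin M → ℝ, A.mulVec x = Y → x = p) := by
  have hgZ : ∀ i, 0 < g i + Z := fun i => add_pos (hg i) hZ
  have hgZ' : ∀ i, g i + Z ≠ 0 := fun i => (hgZ i).ne'
  set c : ℝ := ∑ j, 1 / (g j + Z) with hc
  have hZc : (∑ j, Z / (g j + Z)) = Z * c := by
    rw [hc, Finset.mul_sum]
    exact Finset.sum_congr rfl fun j _ => by rw [mul_one_div]
  set D : ℝ := (M : ℝ) - Z * c with hD
  have hM0 : (M : ℝ) ≠ 0 := Nat.cast_ne_zero.mpr hM.ne'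
  have hDpos : 0 < D := by
    have hMeq : (M : ℝ) = ∑ _j : Fin M, (1 : ℝ) := by simp
    have h : D = ∑ j, (g j / (g j + Z)) := by
      rw [hD, ← hZc, hMeq, ← Finset.sum_sub_distrib]
      refine Finset.sum_congr rfl fun j _ => ?_
      rw [eq_div_iff (hgZ' j), sub_mul, one_mul, div_mul_cancel₀ _ (hgZ' j)]
      ring
    rw [h]
    exact Finset.sum_pos (fun j _ => div_pos (hg j) (hgZ j))
      (Finset.univ_nonempty_iff.mpr ⟨⟨0, hM⟩⟩)
  have hD0 : D ≠ 0 := hDpos.ne'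
  have hp' : ∀ i, p i = B / ((g i + Z) * D) := by
    intro i; rw [hp i, hZc, ← hD]; field_simp
  -- the key computation of mulVec
  have hmv : ∀ (x : Fin M → ℝ) (i : Fin M),
      A.mulVec x i = (M : ℝ) * (g i + Z) * x i - Z * ∑ j, x j := by
    intro x i
    have h : A.mulVec x i = ∑ j, ((if i = j then (M : ℝ) * (g i + Z) else 0) - Z) * x j := by
      simp only [Matrix.mulVec, dotProduct]
      refine Finset.sum_congr rfl fun j _ => ?_
      simp only [hA]
      by_cases h : i = j <;> simp [h]
    rw [h]
    simp only [sub_mul, Finset.sum_sub_distrib, ite_mul, zero_mul]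
    rw [Finset.sum_ite_eq Finset.univ i fun j => (M : ℝ) * (g i + Z) * x j]
    simp [Finset.mul_sum]
  have hsum_p : (∑ j, p j) = B * c / D := by
    rw [hc, Finset.mul_sum, Finset.sum_div]
    refine Finset.sum_congr rfl fun j _ => ?_
    rw [hp' j]
    field_simp
  refine ⟨fun i => by rw [hp' i]; exact div_pos hB (mul_pos (hgZ i) hDpos), ?_, ?_⟩
  · funext i
    rw [hmv p i, hsum_p, hp' i, hY i]
    have e1 : (M : ℝ) * (g i + Z) * (B / ((g i + Z) * D)) = (M : ℝ) * B / D := by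
      rw [mul_div_assoc', div_eq_div_iff (mul_ne_zero (hgZ' i) hD0) hD0]
      ring
    rw [e1, mul_div_assoc', div_sub_div_same, div_eq_iff hD0, hD]
    ring
  · intro x hx
    set S : ℝ := ∑ j, x j with hS
    have hxi : ∀ i, x i = (B + Z * S) / ((M : ℝ) * (g i + Z)) := by
      intro i
      have h1 : (M : ℝ) * (g i + Z) * x i - Z * S = B := by
        rw [← hmv x i, hx, hY i]
      rw [eq_div_iff (mul_ne_zero hM0 (hgZ' i))]
      linarith [h1]
    have hSeq : (M : ℝ) * S = (B + Z * S) * c := by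
      have h2 : S = ∑ j, (B + Z * S) / ((M : ℝ) * (g j + Z)) := by
        conv_lhs => rw [hS]
        exact Finset.sum_congr rfl fun j _ => hxi j
      calc (M : ℝ) * S = ∑ j, (M : ℝ) * ((B + Z * S) / ((M : ℝ) * (g j + Z))) := by
            rw [← Finset.mul_sum, ← h2]
        _ = ∑ j, (B + Z * S) * (1 / (g j + Z)) := by
            refine Finset.sum_congr rfl fun j _ => ?_
            rw [mul_one_div, mul_div_assoc', mul_div_mul_left _ _ hM0]
        _ = (B + Z * S) * c := by rw [hc]; exact (Finset.mul_sum _ _ _).symm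
    have hSval : S = B * c / D := by
      rw [eq_div_iff hD0, hD]
      linear_combination hSeq
    funext i
    rw [hxi i, hp' i, hSval]
    rw [div_eq_div_iff (mul_ne_zero hM0 (hgZ' i)) (mul_ne_zero (hgZ' i) hD0)]
    have hE : B + Z * (B * c / D) = B * (M : ℝ) / D := by
      rw [mul_div_assoc', add_div' _ _ _ hD0, div_eq_div_iff hD0 hD0, hD]
      ring
    rw [hE, div_mul_eq_mul_div, div_eq_iff hD0]
    ring
end

section
/- Fix positive integers K, T, N, budgets B_n ≥ 0 and parameters ζ_n ≥ 1 for n ∈ Fin N, and let Z = Σ_n ζ_n and B = Σ_n B_n with B > 0. Let G : Fin K × Fin T → ℝ satisfy G(k,t) > 0 for all (k,t), and define prices p*(k,t) = (B/(G(k,t) + Z)) · (1/(K·T − Σ_{(j,s)} Z/(G(j,s) + Z))). Then for every (k,t), Σ_{n} [ (B_n + ζ_n·Σ_{(j,s)} p*(j,s))/(K·T·p*(k,t)) − ζ_n ] = G(k,t). -/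
open scoped BigOperators

/-- at the equilibrium prices, aggregate demand equals the
available power of every company at every period. -/
theorem market_clearing
    (K T N : ℕ) (hK : 0 < K) (hT : 0 < T) (hN : 0 < N)
    (Bb : Fin N → ℝ) (hBb : ∀ n, 0 ≤ Bb n)
    (ζ : Fin N → ℝ) (hζ : ∀ n, 1 ≤ ζ n)
    (Z B : ℝ) (hZ : Z = ∑ n, ζ n) (hB : B = ∑ n, Bb n) (hBpos : 0 < B)
    (G : Fin K × Fin T → ℝ) (hG : ∀ x, 0 < G x)
    (pstar : Fin K × Fin T → ℝ)
    (hp : ∀ x, pstar x =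
      (B / (G x + Z)) * (1 / ((K : ℝ) * T - ∑ y, Z / (G y + Z)))) :
    ∀ x : Fin K × Fin T,
      (∑ n, ((Bb n + ζ n * ∑ y, pstar y) / ((K : ℝ) * T * pstar x) - ζ n))
        = G x := by
  intro x
  have hZpos : 0 < Z := by
    rw [hZ]
    have : (0:ℝ) < ∑ n : Fin N, 1 := by
      simp [Finset.card_univ]
      exact_mod_cast hN
    calc (0:ℝ) < ∑ n : Fin N, 1 := this
      _ ≤ ∑ n, ζ n := Finset.sum_le_sum fun n _ => hζ n
  have hGZ : ∀ y : Fin K × Fin T, 0 < G y + Z := fun y => add_pos (hG y) hZpos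
  have hKT : (0:ℝ) < (K:ℝ) * T := by positivity
  set S1 : ℝ := ∑ y : Fin K × Fin T, Z / (G y + Z) with hS1
  have hS1lt : S1 < (K:ℝ) * T := by
    have hne : (Finset.univ : Finset (Fin K × Fin T)).Nonempty := by
      haveI : NeZero K := ⟨hK.ne'⟩
      haveI : NeZero T := ⟨hT.ne'⟩
      exact Finset.univ_nonempty
    calc S1 < ∑ _y : Fin K × Fin T, (1:ℝ) := by
          apply Finset.sum_lt_sum_of_nonempty hne
          intro y _
          rw [div_lt_one (hGZ y)]
          linarith [hG y]
      _ = (K:ℝ) * T := by simp [Finset.card_univ, mul_comm]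
  set D : ℝ := (K:ℝ) * T - S1 with hD
  have hDpos : 0 < D := by simp [hD]; linarith
  have hpx : pstar x = B / (G x + Z) * (1 / D) := hp x
  -- sum of prices
  have hS : ∑ y, pstar y = (B / D) * (S1 / Z) := by
    have : ∀ y : Fin K × Fin T, pstar y = (B / D / Z) * (Z / (G y + Z)) := by
      intro y
      have h1 : (G y + Z) ≠ 0 := (hGZ y).ne'
      have h2 : D ≠ 0 := hDpos.ne'
      have h3 : Z ≠ 0 := hZpos.ne'
      rw [hp y]
      field_simp
    rw [Finset.sum_congr rfl fun y _ => this y, ← Finset.mul_sum, ← hS1]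
    field_simp
  -- aggregate
  have hsum : (∑ n, ((Bb n + ζ n * ∑ y, pstar y) / ((K : ℝ) * T * pstar x) - ζ n))
      = (B + Z * ∑ y, pstar y) / ((K:ℝ) * T * pstar x) - Z := by
    rw [Finset.sum_sub_distrib, ← hZ, ← Finset.sum_div, Finset.sum_add_distrib,
      ← hB, ← Finset.sum_mul]
    rw [← hZ]
  rw [hsum, hS, hpx]
  have hGx : (G x + Z) ≠ 0 := (hGZ x).ne'
  have hBne : B ≠ 0 := hBpos.ne'
  have hDne : D ≠ 0 := hDpos.ne'
  have hZne : Z ≠ 0 := hZpos.ne'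
  have hKTne : (K:ℝ) * T ≠ 0 := hKT.ne'
  field_simp
  ring
end

section
/- Fix a positive integer T and reals N > 0, γ₀ > 0, B > 0, and G_tot > 0. For G : Fin T → ℝ define f(G) = Σ_t G(t)/(G(t) + N) and F(G) = B·f(G)/(γ₀ + f(G)). Let D = { G : Fin T → ℝ | (∀ t, G(t) ≥ 0) ∧ Σ_t G(t) ≤ G_tot } and let G* be the constant allocation G*(t) = G_tot/T. Then G* ∈ D, F(G) ≤ F(G*) for all G ∈ D, and F(G) = F(G*) for G ∈ D implies G = G*. -/
/-!
The revenue is `B y / (γ₀ + y)` applied to `f G = ∑ₜ g (G t)` with `g x = x / (x + N)`; the outer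
map is strictly increasing, so it suffices to show that the equal split `a = G_tot / T` is the
unique maximiser of `f` on the feasible set. This follows from the tangent line inequality of the
concave function `g` at `a`, whose gap `N (x - a)² / ((a + N)² (x + N))` vanishes only at `x = a`:
summed over `t` the linear terms contribute `g'(a) (∑ₜ G t - G_tot) ≤ 0`.
-/

open Finset Set

section

variable {N a x : ℝ}

lemma tangent_sub_div_add_eq (hx : x + N ≠ 0) (ha : a + N ≠ 0) :
    a / (a + N) + N / (a + N) ^ 2 * (x - a) - x / (x + N) =
      N * (x - a) ^ 2 / ((a + N) ^ 2 * (x + N)) := by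
  field_simp
  ring

lemma div_add_le_tangent (hN : 0 < N) (ha : 0 ≤ a) (hx : 0 ≤ x) :
    x / (x + N) ≤ a / (a + N) + N / (a + N) ^ 2 * (x - a) := by
  rw [← sub_nonneg, tangent_sub_div_add_eq (by positivity) (by positivity)]
  positivity

lemma div_add_lt_tangent (hN : 0 < N) (ha : 0 ≤ a) (hx : 0 ≤ x) (hxa : x ≠ a) :
    x / (x + N) < a / (a + N) + N / (a + N) ^ 2 * (x - a) := by
  rw [← sub_pos, tangent_sub_div_add_eq (by positivity) (by positivity)]
  have := sq_pos_of_ne_zero (sub_ne_zero.2 hxa)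
  positivity

end

section

variable {ι : Type*} [Fintype ι] {N a : ℝ} {G : ι → ℝ}

lemma sum_tangent_le (hN : 0 < N) (hsum : ∑ i, G i ≤ Fintype.card ι * a) :
    ∑ i, (a / (a + N) + N / (a + N) ^ 2 * (G i - a)) ≤ Fintype.card ι * (a / (a + N)) := by
  have hslope : 0 ≤ N / (a + N) ^ 2 := by positivity
  rw [sum_add_distrib, ← mul_sum, sum_sub_distrib]
  simp only [sum_const, card_univ, nsmul_eq_mul]
  nlinarith

lemma sum_div_add_le (hN : 0 < N) (ha : 0 ≤ a) (hG : ∀ i, 0 ≤ G i)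
    (hsum : ∑ i, G i ≤ Fintype.card ι * a) :
    ∑ i, G i / (G i + N) ≤ Fintype.card ι * (a / (a + N)) :=
  (sum_le_sum fun i _ => div_add_le_tangent hN ha (hG i)).trans (sum_tangent_le hN hsum)

lemma sum_div_add_lt (hN : 0 < N) (ha : 0 ≤ a) (hG : ∀ i, 0 ≤ G i)
    (hsum : ∑ i, G i ≤ Fintype.card ι * a) (hne : ∃ i, G i ≠ a) :
    ∑ i, G i / (G i + N) < Fintype.card ι * (a / (a + N)) := by
  obtain ⟨j, hj⟩ := hne
  refine (sum_lt_sum (fun i _ => div_add_le_tangent hN ha (hG i)) ?_).trans_le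
    (sum_tangent_le hN hsum)
  exact ⟨j, mem_univ j, div_add_lt_tangent hN ha (hG j) hj⟩

end

lemma strictMonoOn_mul_div_add {B γ₀ : ℝ} (hB : 0 < B) (hγ : 0 < γ₀) :
    StrictMonoOn (fun y => B * y / (γ₀ + y)) (Ici 0) := by
  intro y hy z hz hyz
  simp only [Set.mem_Ici] at hy hz
  rw [div_lt_div_iff₀ (by linarith) (by linarith)]
  nlinarith [mul_pos (mul_pos hB hγ) (sub_pos.2 hyz)]

/-- core of Theorem 3: the equal split is feasible, maximizes
the equilibrium revenue over the feasible set, and is the unique maximizer. -/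
theorem equal_split_unique_optimum
    (T : ℕ) (hT : 0 < T)
    (N γ₀ B Gtot : ℝ) (hN : 0 < N) (hγ : 0 < γ₀) (hB : 0 < B) (hG : 0 < Gtot) :
    let f : (Fin T → ℝ) → ℝ := fun G => ∑ t, G t / (G t + N)
    let F : (Fin T → ℝ) → ℝ := fun G => B * f G / (γ₀ + f G)
    let D : Set (Fin T → ℝ) := {G | (∀ t, 0 ≤ G t) ∧ (∑ t, G t) ≤ Gtot}
    let Gstar : Fin T → ℝ := fun _ => Gtot / T
    Gstar ∈ D ∧ (∀ G ∈ D, F G ≤ F Gstar) ∧ (∀ G ∈ D, F G = F Gstar → G = Gstar) := by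
  intro f F D Gstar
  have ha : 0 ≤ Gtot / T := by positivity
  have hTa : (Fintype.card (Fin T) : ℝ) * (Gtot / T) = Gtot := by
    rw [Fintype.card_fin]
    exact mul_div_cancel₀ Gtot (by positivity)
  have hf_star : f Gstar = Fintype.card (Fin T) * (Gtot / T / (Gtot / T + N)) := by
    simp [f, Gstar]
  have hf_nonneg : ∀ G ∈ D, 0 ≤ f G := fun G hGD =>
    sum_nonneg fun t _ => div_nonneg (hGD.1 t) (by linarith [hGD.1 t])
  have hstar : Gstar ∈ D :=
    ⟨fun _ => ha, by simp only [Gstar, sum_const, card_univ, nsmul_eq_mul, hTa, le_refl]⟩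
  have hφ := strictMonoOn_mul_div_add hB hγ
  refine ⟨hstar, fun G hGD => ?_, fun G hGD hFG => ?_⟩
  · refine hφ.monotoneOn (hf_nonneg G hGD) (hf_nonneg Gstar hstar) ?_
    exact hf_star ▸ sum_div_add_le hN ha hGD.1 (hGD.2.trans_eq hTa.symm)
  · by_contra hne
    refine (hφ (hf_nonneg G hGD) (hf_nonneg Gstar hstar) ?_).ne hFG
    exact hf_star ▸ sum_div_add_lt hN ha hGD.1 (hGD.2.trans_eq hTa.symm) (Function.ne_iff.1 hne)
end

section
/- Let p > 0, G > 0, N > 0, δ ≥ 0, and D be real numbers with D > −N, and set ε = (G + N)/p + δ. Then the updated price p' = p + (D − G)/ε satisfies p' > 0. -/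
/-- key step of Theorem 4: the price update keeps prices
strictly positive. -/
theorem price_update_positive
    (p G N δ D : ℝ) (hp : 0 < p) (hG : 0 < G) (hN : 0 < N)
    (hδ : 0 ≤ δ) (hD : D > -N)
    (ε : ℝ) (hε : ε = (G + N) / p + δ) :
    0 < p + (D - G) / ε := by
  have hε0 : 0 < ε := by rw [hε]; positivity
  have key : p + (D - G) / ε = (p * ε + (D - G)) / ε := by
    field_simp
  rw [key]
  apply div_pos _ hε0
  have hpε : p * ε = G + N + p * δ := by
    rw [hε]; field_simp
  nlinarith [mul_nonneg hp.le hδ]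
end
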